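/- Let V : ℝ → ℝ be continuous, let x_a, x_b ∈ ℝ satisfy V(x_a) ≤ V(x_b), and define W(x,y) = min{V(x), V(y)}. Then there exists a continuous path γ : [0,1] → ℝ² with γ(0) = (x_a, x_a), γ(1) = (x_b, x_b), and W(γ(t)) ≤ W(x_b, x_b) = V(x_b) for all t ∈ [0,1]. In particular it is possible to travel from (x_a, x_a) to (x_b, x_b) along a path on which W never exceeds W(x_b, x_b). -/

import Mathlib

/-!
Move the second coordinate from `x_a` to `x_b` while the first stays at `x_a`, then the first
coordinate while the second stays at `x_b`. On the first leg `W ≤ V(x_a) ≤ V(x_b)`, on the second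
`W ≤ V(x_b)`.
-/

namespace Path

variable {X : Type*} [TopologicalSpace X] {a b : X}

noncomputable def viaCorner (γ : Path a b) : Path (a, a) (b, b) :=
  ((Path.refl a).prod γ).trans (γ.prod (Path.refl b))

theorem viaCorner_fst_eq_or_snd_eq (γ : Path a b) (t : unitInterval) :
    (γ.viaCorner t).1 = a ∨ (γ.viaCorner t).2 = b := by
  unfold viaCorner
  rw [trans_apply]
  split_ifs
  · exact Or.inl rfl
  · exact Or.inr rfl

end Path

theorem stmt12_general (V : ℝ → ℝ) (xa xb : ℝ) (hab : V xa ≤ V xb) :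
    ∃ γ : ℝ → ℝ × ℝ, ContinuousOn γ (Set.Icc 0 1) ∧ γ 0 = (xa, xa) ∧ γ 1 = (xb, xb) ∧
      (∀ t ∈ Set.Icc (0 : ℝ) 1, min (V (γ t).1) (V (γ t).2) ≤ min (V xb) (V xb)) ∧
      min (V xb) (V xb) = V xb := by
  let δ := PathConnectedSpace.somePath xa xb
  refine ⟨δ.viaCorner.extend, δ.viaCorner.continuous_extend.continuousOn, Path.extend_zero _,
    Path.extend_one _, fun t ht => ?_, min_self _⟩
  rw [min_self, Path.extend_apply _ ht]
  rcases δ.viaCorner_fst_eq_or_snd_eq ⟨t, ht⟩ with h | h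
  · exact (min_le_left _ _).trans (by rwa [h])
  · exact (min_le_right _ _).trans (by rw [h])

/-- for continuous `V : ℝ → ℝ` with `V(x_a) ≤ V(x_b)` and
`W(x,y) = min(V(x), V(y))`, there is a continuous path `γ : [0,1] → ℝ²` from
`(x_a, x_a)` to `(x_b, x_b)` along which `W` never exceeds `W(x_b, x_b) = V(x_b)`. -/
theorem stmt12 (V : ℝ → ℝ) (hV : Continuous V) (xa xb : ℝ) (hab : V xa ≤ V xb) :
    ∃ γ : ℝ → ℝ × ℝ, ContinuousOn γ (Set.Icc 0 1) ∧ γ 0 = (xa, xa) ∧ γ 1 = (xb, xb) ∧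
      (∀ t ∈ Set.Icc (0 : ℝ) 1, min (V (γ t).1) (V (γ t).2) ≤ min (V xb) (V xb)) ∧
      min (V xb) (V xb) = V xb :=
  stmt12_general V xa xb hab
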